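/- With the notation of the low rank reduction, if β = max_σ max{‖X_σ‖, ‖Y_σ^T‖} > 0 and ‖·‖ is submultiplicative, then for all k ≥ 2: (ρ_k(G,A))^k ≤ β² (ρ_{k-1}(G',A'))^{k-1} and (ρ_{k-1}(G',A'))^{k-1} ≤ β² (ρ_{k-2}(G,A))^{k-2}, where ρ_k(H,B) = max over H-admissible length-k products of ‖B_s‖^{1/k}. -/

import Mathlib

/-!
Writing `A_σ = X_σ Y_σᵀ` and regrouping,
`A_{σ_k} ⋯ A_{σ_1} = X_{σ_k} (Y_{σ_k}ᵀ X_{σ_{k-1}}) ⋯ (Y_{σ_2}ᵀ X_{σ_1}) Y_{σ_1}ᵀ`,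
and the middle factor is the `A'`-product along the path of `G'` formed by the pairs of
consecutive edges. Conversely, along a path of `G'` the labels chain up, so an `A'`-product of
length `k - 1` regroups as `Yᵀ (A-product along the k - 2 interior edges) X`. In both cases
submultiplicativity costs `β²`, and `ρ_k^k` is simply the largest norm of a length-`k` product.
-/

open scoped Classical
open Filter MvPolynomial Matrix

/-- The Frobenius norm, a submultiplicative matrix norm. -/
noncomputable def frob {a b : ℕ} (M : Matrix (Fin a) (Fin b) ℝ) : ℝ :=
  Real.sqrt (∑ i, ∑ j, (M i j)^2)

/-- The set `E_k` of paths of length `k` in the labeled graph with edge set `E ⊆ V × V × L`: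
sequences of `k` edges of `E` such that the target of each edge is the source of the next. -/
noncomputable def pathSet {V L : Type*} [Fintype V] [Fintype L]
    (E : Finset (V × V × L)) (k : ℕ) : Finset (Fin k → V × V × L) :=
  Finset.univ.filter (fun s =>
    (∀ i, s i ∈ E) ∧
    ∀ (i : ℕ) (h : i + 1 < k), (s ⟨i, Nat.lt_of_succ_lt h⟩).2.1 = (s ⟨i+1, h⟩).1)

/-- The sequence of labels along a path. -/
def labels {V L : Type*} {k : ℕ} (s : Fin k → V × V × L) : Fin k → L :=
  fun i => (s i).2.2

/-- The product of matrices along a label sequence: `A_s = A_{σ_k} ⋯ A_{σ_1}`. -/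
noncomputable def prodA {n : ℕ} {L : Type*} (A : L → Matrix (Fin n) (Fin n) ℝ)
    {k : ℕ} (σ : Fin k → L) : Matrix (Fin n) (Fin n) ℝ :=
  ((List.ofFn σ).reverse.map A).prod

/-- Maximum of a real-valued function over a (nonempty) finite set. -/
noncomputable def maxOver {α : Type*} (s : Finset α) (f : α → ℝ) : ℝ :=
  sSup (f '' ↑s)

/-- Strong connectivity: every node reaches every node by a path of length ≥ 1. -/
def StronglyConnected {V L : Type*} [Fintype V] [Fintype L]
    (E : Finset (V × V × L)) : Prop :=
  ∀ u v : V, ∃ k : ℕ, ∃ s ∈ pathSet E (k+1), (s 0).1 = u ∧ (s (Fin.last k)).2.1 = v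

section Frobenius

open scoped Matrix.Norms.Frobenius

variable {a b c d : ℕ}

lemma frob_eq_norm (M : Matrix (Fin a) (Fin b) ℝ) : frob M = ‖M‖ := by
  simp [frob, Matrix.frobenius_norm_def, Real.sqrt_eq_rpow]

lemma frob_nonneg (M : Matrix (Fin a) (Fin b) ℝ) : 0 ≤ frob M :=
  Real.sqrt_nonneg _

lemma frob_mul (M : Matrix (Fin a) (Fin b) ℝ) (N : Matrix (Fin b) (Fin c) ℝ) :
    frob (M * N) ≤ frob M * frob N := by
  simpa only [frob_eq_norm] using Matrix.frobenius_norm_mul M N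

lemma frob_mul_le_of_le {M : Matrix (Fin a) (Fin b) ℝ} {N : Matrix (Fin b) (Fin c) ℝ}
    {x y : ℝ} (hM : frob M ≤ x) (hN : frob N ≤ y) : frob (M * N) ≤ x * y :=
  (frob_mul M N).trans <| mul_le_mul hM hN (frob_nonneg N) ((frob_nonneg M).trans hM)

lemma frob_mul_mul_le {U : Matrix (Fin a) (Fin b) ℝ} {W : Matrix (Fin c) (Fin d) ℝ} {β : ℝ}
    (hU : frob U ≤ β) (hW : frob W ≤ β) (P : Matrix (Fin b) (Fin c) ℝ) :
    frob (U * P * W) ≤ β ^ 2 * frob P := by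
  have := frob_mul_le_of_le (frob_mul_le_of_le hU (le_refl (frob P))) hW
  linarith

end Frobenius

section MaxOver

-- `maxOver ∅ f = sSup ∅ = 0`, hence the nonnegativity hypotheses.
variable {α β : Type*} {s : Finset α} {t : Finset β} {f : α → ℝ}

lemma le_maxOver {a : α} (ha : a ∈ s) : f a ≤ maxOver s f :=
  le_csSup (s.finite_toSet.image f).bddAbove ⟨a, ha, rfl⟩

lemma maxOver_le {x : ℝ} (hx : 0 ≤ x) (h : ∀ a ∈ s, f a ≤ x) : maxOver s f ≤ x :=
  Real.sSup_le (by rintro _ ⟨a, ha, rfl⟩; exact h a ha) hx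

lemma maxOver_nonneg (hf : ∀ a, 0 ≤ f a) : 0 ≤ maxOver s f :=
  Real.sSup_nonneg (by rintro _ ⟨a, -, rfl⟩; exact hf a)

lemma maxOver_rpow (hf : ∀ a, 0 ≤ f a) {c : ℝ} (hc : 0 < c) :
    maxOver s (fun a => f a ^ c) = maxOver s f ^ c := by
  rcases s.eq_empty_or_nonempty with rfl | hs
  · simp [maxOver, Real.zero_rpow hc.ne']
  obtain ⟨a₀, ha₀, hmax⟩ := (hs.to_set.image f).csSup_mem (s.finite_toSet.image f)
  change f a₀ = maxOver s f at hmax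
  rw [← hmax]
  exact le_antisymm
    (maxOver_le (Real.rpow_nonneg (hf a₀) c) fun a ha => by
      gcongr
      exacts [hf a, hmax ▸ le_maxOver ha])
    (le_maxOver (f := fun a => f a ^ c) ha₀)

lemma maxOver_rpow_pow (hf : ∀ a, 0 ≤ f a) {c : ℝ} {K : ℕ} (hc : c * K = 1) :
    (maxOver s fun a => f a ^ c) ^ K = maxOver s f := by
  have hc0 : 0 < c := by
    by_contra! h
    nlinarith [K.cast_nonneg (α := ℝ)]
  rw [maxOver_rpow hf hc0, ← Real.rpow_natCast, ← Real.rpow_mul (maxOver_nonneg hf), hc,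
    Real.rpow_one]

lemma maxOver_le_mul_maxOver {g : β → ℝ} (φ : α → β) (hφ : ∀ a ∈ s, φ a ∈ t)
    (hg : ∀ b, 0 ≤ g b) {x : ℝ} (hx : 0 ≤ x) (h : ∀ a ∈ s, f a ≤ x * g (φ a)) :
    maxOver s f ≤ x * maxOver t g :=
  maxOver_le (mul_nonneg hx (maxOver_nonneg hg)) fun a ha =>
    (h a ha).trans (mul_le_mul_of_nonneg_left (le_maxOver (hφ a ha)) hx)

end MaxOver

section ProdA

variable {n r : ℕ} {L L' : Type*}

lemma prodA_zero (A : L → Matrix (Fin n) (Fin n) ℝ) (σ : Fin 0 → L) : prodA A σ = 1 := by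
  simp [prodA]

lemma prodA_one (A : L → Matrix (Fin n) (Fin n) ℝ) (σ : Fin 1 → L) : prodA A σ = A (σ 0) := by
  simp [prodA]

lemma prodA_succ (A : L → Matrix (Fin n) (Fin n) ℝ) {k : ℕ} (σ : Fin (k + 1) → L) :
    prodA A σ = A (σ (Fin.last k)) * prodA A (fun i : Fin k => σ i.castSucc) := by
  rw [prodA, List.ofFn_succ']
  simp [prodA]

lemma prodA_congr {A : L → Matrix (Fin n) (Fin n) ℝ} {B : L' → Matrix (Fin n) (Fin n) ℝ}
    {k : ℕ} {σ : Fin k → L} {τ : Fin k → L'} (h : ∀ i, A (σ i) = B (τ i)) :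
    prodA A σ = prodA B τ := by
  simp only [prodA, List.map_reverse, List.map_ofFn]
  congr 3
  exact funext h

lemma prodA_mul_regroup (U : L → Matrix (Fin n) (Fin r) ℝ) (W : L → Matrix (Fin r) (Fin n) ℝ) :
    ∀ {k : ℕ} (σ : Fin (k + 1) → L),
      prodA (fun l => U l * W l) σ = U (σ (Fin.last k)) *
        prodA (fun p : L × L => W p.1 * U p.2) (fun i : Fin k => (σ i.succ, σ i.castSucc)) *
          W (σ 0)
  | 0, σ => by simp [prodA_one, prodA_zero]
  | k + 1, σ => by
    rw [prodA_succ, prodA_mul_regroup U W (fun i => σ i.castSucc), prodA_succ]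
    simp only [Fin.succ_last, Fin.succ_castSucc, Fin.castSucc_zero, Matrix.mul_assoc]

end ProdA

section LineGraph

variable {V L : Type*} [Fintype V] [Fintype L]

/-- `E'` is the edge set of the graph `G'` of the low rank reduction: its vertices are the edges
of `E`, and consecutive edges `e = (u, v, σ₁)`, `f = (v, w, σ₂)` are joined by an edge
labelled `(σ₂, σ₁)`. -/
def IsLineGraph (E : Finset (V × V × L))
    (E' : Finset ((V × V × L) × (V × V × L) × (L × L))) : Prop :=
  ∀ e f l, (e, f, l) ∈ E' ↔ e ∈ E ∧ f ∈ E ∧ e.2.1 = f.1 ∧ l = (f.2.2, e.2.2)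

def toLinePath {k : ℕ} (s : Fin (k + 1) → V × V × L) :
    Fin k → (V × V × L) × (V × V × L) × (L × L) :=
  fun i => (s i.castSucc, s i.succ, ((s i.succ).2.2, (s i.castSucc).2.2))

/-- A path `(f₀,f₁), (f₁,f₂), …, (f_k,f_{k+1})` of `E'` determines the path `f₀, …, f_{k+1}` of
`E`; `innerPath` keeps its interior edges `f₁, …, f_k`. -/
def innerPath {k : ℕ} (s : Fin (k + 1) → (V × V × L) × (V × V × L) × (L × L)) :
    Fin k → V × V × L :=
  fun i => (s i.castSucc).2.1

lemma mem_pathSet_succ {E : Finset (V × V × L)} {k : ℕ} {s : Fin (k + 1) → V × V × L} :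
    s ∈ pathSet E (k + 1) ↔ (∀ i, s i ∈ E) ∧ ∀ i : Fin k, (s i.castSucc).2.1 = (s i.succ).1 := by
  simp only [pathSet, Finset.mem_filter, Finset.mem_univ, true_and]
  exact and_congr_right fun _ => ⟨fun h i => h i (by omega), fun h i hi => h ⟨i, by omega⟩⟩

variable {E : Finset (V × V × L)} {E' : Finset ((V × V × L) × (V × V × L) × (L × L))}

lemma toLinePath_mem (hG : IsLineGraph E E') {k : ℕ} {s : Fin (k + 1) → V × V × L}
    (hs : s ∈ pathSet E (k + 1)) : toLinePath s ∈ pathSet E' k := by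
  rw [mem_pathSet_succ] at hs
  simp only [pathSet, Finset.mem_filter, Finset.mem_univ, true_and]
  exact ⟨fun i => (hG _ _ _).2 ⟨hs.1 _, hs.1 _, hs.2 i, rfl⟩, fun _ _ => rfl⟩

lemma innerPath_mem (hG : IsLineGraph E E') {k : ℕ}
    {s : Fin (k + 1) → (V × V × L) × (V × V × L) × (L × L)} (hs : s ∈ pathSet E' (k + 1)) :
    innerPath s ∈ pathSet E k := by
  rw [mem_pathSet_succ] at hs
  simp only [pathSet, Finset.mem_filter, Finset.mem_univ, true_and]
  refine ⟨fun i => ((hG _ _ _).1 (hs.1 _)).2.1, fun i hi => ?_⟩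
  exact (congrArg (·.2.1) (hs.2 ⟨i, by omega⟩)).trans ((hG _ _ _).1 (hs.1 _)).2.2.1

lemma labels_succ_snd_eq_innerPath (hG : IsLineGraph E E') {k : ℕ}
    {s : Fin (k + 1) → (V × V × L) × (V × V × L) × (L × L)} (hs : s ∈ pathSet E' (k + 1))
    (i : Fin k) : (labels s i.succ).2 = labels (innerPath s) i := by
  rw [mem_pathSet_succ] at hs
  unfold labels innerPath
  rw [((hG _ _ _).1 (hs.1 i.succ)).2.2.2, hs.2 i]

lemma labels_castSucc_fst_eq_innerPath (hG : IsLineGraph E E') {k : ℕ}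
    {s : Fin (k + 1) → (V × V × L) × (V × V × L) × (L × L)} (hs : s ∈ pathSet E' (k + 1))
    (i : Fin k) : (labels s i.castSucc).1 = labels (innerPath s) i := by
  rw [mem_pathSet_succ] at hs
  unfold labels innerPath
  rw [((hG _ _ _).1 (hs.1 i.castSucc)).2.2.2]

end LineGraph

section LowRank

variable {n r : ℕ} {L : Type*} {X Y : L → Matrix (Fin n) (Fin r) ℝ} {β : ℝ}

lemma frob_prodA_mul_transpose_le (hX : ∀ l, frob (X l) ≤ β) (hY : ∀ l, frob (Y l)ᵀ ≤ β)
    {k : ℕ} (σ : Fin (k + 1) → L) :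
    frob (prodA (fun l => X l * (Y l)ᵀ) σ) ≤
      β ^ 2 * frob (prodA (fun p : L × L => (Y p.1)ᵀ * X p.2)
        fun i : Fin k => (σ i.succ, σ i.castSucc)) := by
  rw [prodA_mul_regroup X fun l => (Y l)ᵀ]
  exact frob_mul_mul_le (hX _) (hY _) _

lemma frob_prodA_transpose_mul_le {V : Type*} [Fintype V] [Fintype L] {E : Finset (V × V × L)}
    {E' : Finset ((V × V × L) × (V × V × L) × (L × L))} (hG : IsLineGraph E E')
    (hX : ∀ l, frob (X l) ≤ β) (hY : ∀ l, frob (Y l)ᵀ ≤ β) {k : ℕ}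
    {s : Fin (k + 1) → (V × V × L) × (V × V × L) × (L × L)} (hs : s ∈ pathSet E' (k + 1)) :
    frob (prodA (fun p : L × L => (Y p.1)ᵀ * X p.2) (labels s)) ≤
      β ^ 2 * frob (prodA (fun l => X l * (Y l)ᵀ) (labels (innerPath s))) := by
  rw [prodA_mul_regroup (fun p : L × L => (Y p.1)ᵀ) fun p => X p.2,
    prodA_congr (B := fun l => X l * (Y l)ᵀ) (τ := labels (innerPath s)) fun i => by
      rw [labels_succ_snd_eq_innerPath hG hs, labels_castSucc_fst_eq_innerPath hG hs]]
  exact frob_mul_mul_le (hY _) (hX _) _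

end LowRank

theorem low_rank_finite_horizon_general {m n r : ℕ}
    (A : Fin m → Matrix (Fin n) (Fin n) ℝ)
    (X Y : Fin m → Matrix (Fin n) (Fin r) ℝ)
    (hA : ∀ σ, A σ = X σ * (Y σ)ᵀ)
    {V : Type*} [Fintype V] (E : Finset (V × V × Fin m))
    (A' : Fin m × Fin m → Matrix (Fin r) (Fin r) ℝ)
    (hA' : ∀ p : Fin m × Fin m, A' p = (Y p.1)ᵀ * X p.2)
    (E' : Finset ((V × V × Fin m) × (V × V × Fin m) × (Fin m × Fin m)))
    (hE' : ∀ e f : V × V × Fin m, ∀ l : Fin m × Fin m,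
      (e, f, l) ∈ E' ↔ e ∈ E ∧ f ∈ E ∧ e.2.1 = f.1 ∧ l = (f.2.2, e.2.2))
    (β : ℝ)
    (hβ : β = sSup (Set.range fun σ : Fin m => max (frob (X σ)) (frob ((Y σ)ᵀ)))) :
    ∀ k : ℕ,
      (maxOver (pathSet E (k+2))
          (fun s => frob (prodA A (labels s)) ^ ((1:ℝ)/(k+2)))) ^ (k+2)
        ≤ β ^ 2 *
          (maxOver (pathSet E' (k+1))
            (fun s => frob (prodA A' (labels s)) ^ ((1:ℝ)/(k+1)))) ^ (k+1) ∧
      (maxOver (pathSet E' (k+1))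
          (fun s => frob (prodA A' (labels s)) ^ ((1:ℝ)/(k+1)))) ^ (k+1)
        ≤ β ^ 2 *
          (maxOver (pathSet E k)
            (fun s => frob (prodA A (labels s)) ^ ((1:ℝ)/k))) ^ k := by
  intro k
  obtain rfl : A = fun σ => X σ * (Y σ)ᵀ := funext hA
  obtain rfl : A' = fun p => (Y p.1)ᵀ * X p.2 := funext hA'
  have hXY : ∀ σ, frob (X σ) ≤ β ∧ frob (Y σ)ᵀ ≤ β := fun σ =>
    max_le_iff.1 (hβ ▸ le_csSup (Set.finite_range _).bddAbove (Set.mem_range_self σ))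
  have hX := fun σ => (hXY σ).1
  have hY := fun σ => (hXY σ).2
  have hk2 : (1 : ℝ) / (k + 2) * (k + 2 : ℕ) = 1 := by push_cast; field_simp
  have hk1 : (1 : ℝ) / (k + 1) * (k + 1 : ℕ) = 1 := by push_cast; field_simp
  rw [maxOver_rpow_pow (fun _ => frob_nonneg _) hk2,
    maxOver_rpow_pow (fun _ => frob_nonneg _) hk1]
  refine ⟨maxOver_le_mul_maxOver toLinePath (fun _ => toLinePath_mem hE')
    (fun _ => frob_nonneg _) (sq_nonneg β) fun s _ => frob_prodA_mul_transpose_le hX hY (labels s),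
    ?_⟩
  rcases k with _ | k
  · -- the empty product is `1`, of Frobenius norm `√n`, so `Yᵀ X` is bounded directly
    rw [pow_zero, mul_one]
    exact maxOver_le (sq_nonneg β) fun s _ => by
      rw [prodA_one, sq]
      exact frob_mul_le_of_le (hY _) (hX _)
  · have hk : (1 : ℝ) / ↑(k + 1) * ↑(k + 1) = 1 := one_div_mul_cancel (by positivity)
    rw [maxOver_rpow_pow (fun _ => frob_nonneg _) hk]
    exact maxOver_le_mul_maxOver innerPath (fun _ => innerPath_mem hE') (fun _ => frob_nonneg _)
      (sq_nonneg β) fun _ hs => frob_prodA_transpose_mul_le hE' hX hY hs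

/-- with the notation of the low rank reduction, if
`β = max_σ max{‖X_σ‖, ‖Y_σᵀ‖} > 0` and the norm is submultiplicative (we use the
Frobenius norm), then for all `k ≥ 2`:
`(ρ_k(G,A))^k ≤ β² (ρ_{k-1}(G',A'))^{k-1}` and
`(ρ_{k-1}(G',A'))^{k-1} ≤ β² (ρ_{k-2}(G,A))^{k-2}`,
where `ρ_k(H,B) = max_{s∈H_k} ‖B_s‖^{1/k}`.  (Stated with `k` replaced by `k+2`.) -/
theorem low_rank_finite_horizon {m n r : ℕ} (hm : 0 < m)
    (A : Fin m → Matrix (Fin n) (Fin n) ℝ)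
    (X Y : Fin m → Matrix (Fin n) (Fin r) ℝ)
    (hA : ∀ σ, A σ = X σ * (Y σ)ᵀ)
    {V : Type*} [Fintype V] (E : Finset (V × V × Fin m))
    (hne : ∀ k, (pathSet E k).Nonempty)
    (A' : Fin m × Fin m → Matrix (Fin r) (Fin r) ℝ)
    (hA' : ∀ p : Fin m × Fin m, A' p = (Y p.1)ᵀ * X p.2)
    (E' : Finset ((V × V × Fin m) × (V × V × Fin m) × (Fin m × Fin m)))
    (hE' : ∀ e f : V × V × Fin m, ∀ l : Fin m × Fin m,
      (e, f, l) ∈ E' ↔ e ∈ E ∧ f ∈ E ∧ e.2.1 = f.1 ∧ l = (f.2.2, e.2.2))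
    (β : ℝ) (hβpos : 0 < β)
    (hβ : β = sSup (Set.range fun σ : Fin m => max (frob (X σ)) (frob ((Y σ)ᵀ)))) :
    ∀ k : ℕ,
      (maxOver (pathSet E (k+2))
          (fun s => frob (prodA A (labels s)) ^ ((1:ℝ)/(k+2)))) ^ (k+2)
        ≤ β ^ 2 *
          (maxOver (pathSet E' (k+1))
            (fun s => frob (prodA A' (labels s)) ^ ((1:ℝ)/(k+1)))) ^ (k+1) ∧
      (maxOver (pathSet E' (k+1))
          (fun s => frob (prodA A' (labels s)) ^ ((1:ℝ)/(k+1)))) ^ (k+1)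
        ≤ β ^ 2 *
          (maxOver (pathSet E k)
            (fun s => frob (prodA A (labels s)) ^ ((1:ℝ)/k))) ^ k :=
  low_rank_finite_horizon_general A X Y hA E A' hA' E' hE' β hβ
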